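/- For all complex numbers a₁, a₂, a₃, a₄, a₅, a₆ and z, the polynomial identity N(a,z) − D(a,z) = z·(q₀ + q₁·z + q₂·z²) holds, where N(a,z) = (1+a₁a₂a₃z)(1+a₁a₅a₆z)(1+a₂a₄a₆z)(1+a₃a₄a₅z), D(a,z) = (1−z)(1−a₁a₂a₄a₅z)(1−a₁a₃a₄a₆z)(1−a₂a₃a₅a₆z), and q₀, q₁, q₂ are as defined in the context. -/
import Mathlib


/-- `q₀` for a generalised hyperbolic tetrahedron with parameters `a₁,…,a₆`. -/
noncomputable def q0 (a₁ a₂ a₃ a₄ a₅ a₆ : ℂ) : ℂ :=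
  1 + a₁ * a₂ * a₃ + a₁ * a₅ * a₆ + a₂ * a₄ * a₆ + a₃ * a₄ * a₅
    + a₁ * a₂ * a₄ * a₅ + a₁ * a₃ * a₄ * a₆ + a₂ * a₃ * a₅ * a₆

/-- `q₁`, written in its cleared-denominator polynomial form
`-a₁a₂a₃a₄a₅a₆·((a₁−1/a₁)(a₄−1/a₄) + (a₂−1/a₂)(a₅−1/a₅) + (a₃−1/a₃)(a₆−1/a₆))`. -/
noncomputable def q1 (a₁ a₂ a₃ a₄ a₅ a₆ : ℂ) : ℂ :=
  -(a₂ * a₃ * a₅ * a₆ * (a₁ ^ 2 - 1) * (a₄ ^ 2 - 1)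
    + a₁ * a₃ * a₄ * a₆ * (a₂ ^ 2 - 1) * (a₅ ^ 2 - 1)
    + a₁ * a₂ * a₄ * a₅ * (a₃ ^ 2 - 1) * (a₆ ^ 2 - 1))

/-- `q₂` for a generalised hyperbolic tetrahedron with parameters `a₁,…,a₆`. -/
noncomputable def q2 (a₁ a₂ a₃ a₄ a₅ a₆ : ℂ) : ℂ :=
  a₁ * a₂ * a₃ * a₄ * a₅ * a₆ *
    (a₁ * a₄ + a₂ * a₅ + a₃ * a₆ + a₁ * a₂ * a₆ + a₁ * a₃ * a₅ + a₂ * a₃ * a₄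
      + a₄ * a₅ * a₆ + a₁ * a₂ * a₃ * a₄ * a₅ * a₆)

/-- The numerator `N(a,z)` of `e^{z·∂𝒰/∂z}`. -/
noncomputable def Npoly (a₁ a₂ a₃ a₄ a₅ a₆ z : ℂ) : ℂ :=
  (1 + a₁ * a₂ * a₃ * z) * (1 + a₁ * a₅ * a₆ * z) * (1 + a₂ * a₄ * a₆ * z)
    * (1 + a₃ * a₄ * a₅ * z)

/-- The denominator `D(a,z)` of `e^{z·∂𝒰/∂z}`. -/
noncomputable def Dpoly (a₁ a₂ a₃ a₄ a₅ a₆ z : ℂ) : ℂ :=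
  (1 - z) * (1 - a₁ * a₂ * a₄ * a₅ * z) * (1 - a₁ * a₃ * a₄ * a₆ * z)
    * (1 - a₂ * a₃ * a₅ * a₆ * z)

/-- For all complex `a₁,…,a₆` and `z`,
`N(a,z) − D(a,z) = z·(q₀ + q₁·z + q₂·z²)`. -/
theorem numerator_sub_denominator_eq (a₁ a₂ a₃ a₄ a₅ a₆ z : ℂ) :
    Npoly a₁ a₂ a₃ a₄ a₅ a₆ z - Dpoly a₁ a₂ a₃ a₄ a₅ a₆ z
      = z * (q0 a₁ a₂ a₃ a₄ a₅ a₆ + q1 a₁ a₂ a₃ a₄ a₅ a₆ * z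
          + q2 a₁ a₂ a₃ a₄ a₅ a₆ * z ^ 2) := by
  simp only [Npoly, Dpoly, q0, q1, q2]; ring
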